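/- arXiv:2309.00967 — 3 statements merged into one kernel-verified Lean document; each statement's English description precedes it below -/
import Mathlib

section
/- In the real Okubo algebra 𝒪, the norm is multiplicative: n(x*y) = n(x)·n(y) for all x, y ∈ 𝒪. -/
/-!
With `a = xy`, `b = yx` and `t = tr(xy)`, the Okubo product is `x*y = μa + μ̄b − (t/3)·1`. Because
`μ + μ̄ = 1` and `μμ̄ = 1/3`, squaring it and cycling traces gives
`6 tr((x*y)²) = 2 tr(a²) + 4 tr(x²y²) − 2t²`. For traceless `3 × 3` matrices the right-hand side is
`tr(x²) tr(y²)`: this is the polarization of `tr(x⁴) = tr(x²)²/2`, a consequence of Cayley–Hamilton.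
For Hermitian `x` the trace of `x²` is real, which turns the identity into `n(x*y) = n(x) n(y)`.
-/

open Matrix Complex

noncomputable section

/-- `3 × 3` complex matrices. -/
abbrev M3 : Type := Matrix (Fin 3) (Fin 3) ℂ

/-- The real Okubo algebra: `3 × 3` traceless Hermitian complex matrices. -/
def Okubo : Set M3 := {x | x.IsHermitian ∧ x.trace = 0}

/-- The constant `μ = (3 + i√3)/6`. -/
def okMu : ℂ := (3 + (Real.sqrt 3 : ℂ) * Complex.I) / 6

/-- The Okubo product `x*y = μ·(xy) + μ̄·(yx) − (1/3)Tr(xy)·Id`. -/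
def omul (x y : M3) : M3 :=
  okMu • (x * y) + (starRingEnd ℂ) okMu • (y * x) - ((1 / 3 : ℂ) * (x * y).trace) • (1 : M3)

/-- The Okubic norm `n(x) = (1/6)Tr(x²)` (real-valued on Hermitian matrices). -/
def onorm (x : M3) : ℝ := (1 / 6) * ((x * x).trace).re

/-- The polar form `⟨x,y⟩ = n(x+y) − n(x) − n(y)` of the Okubic norm. -/
def opolar (x y : M3) : ℝ := onorm (x + y) - onorm x - onorm y

theorem Matrix.IsHermitian.ofReal_re_trace {𝕜 n : Type*} [RCLike 𝕜] [Fintype n]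
    {A : Matrix n n 𝕜} (hA : A.IsHermitian) : ((RCLike.re A.trace : ℝ) : 𝕜) = A.trace :=
  RCLike.conj_eq_iff_re.mp <| by rw [starRingEnd_apply, ← trace_conjTranspose, hA.eq]

theorem Matrix.trace_mul_self_mul_trace_mul_self_of_trace_eq_zero {R : Type*} [CommRing R]
    {x y : Matrix (Fin 3) (Fin 3) R} (hx : x.trace = 0) (hy : y.trace = 0) :
    (x * x).trace * (y * y).trace =
      2 * (x * y * (x * y)).trace + 4 * (x * x * (y * y)).trace - 2 * (x * y).trace ^ 2 := by
  simp only [trace, diag, mul_apply, Fin.sum_univ_three] at hx hy ⊢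
  rw [show x 2 2 = -x 0 0 - x 1 1 by linear_combination hx,
    show y 2 2 = -y 0 0 - y 1 1 by linear_combination hy]
  ring

theorem okMu_add_conj : okMu + starRingEnd ℂ okMu = 1 := by
  simp only [okMu, map_div₀, map_add, map_mul, Complex.conj_ofReal, Complex.conj_I, map_ofNat]
  ring

theorem okMu_mul_conj : okMu * starRingEnd ℂ okMu = 1 / 3 := by
  have hsqrt : ((Real.sqrt 3 : ℝ) : ℂ) ^ 2 = 3 := by
    norm_cast
    exact Real.sq_sqrt (by norm_num)
  simp only [okMu, map_div₀, map_add, map_mul, Complex.conj_ofReal, Complex.conj_I, map_ofNat]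
  linear_combination (-(Complex.I ^ 2) / 36) * hsqrt - (1 / 12 : ℂ) * Complex.I_sq

theorem okMu_sq_add_conj_sq : okMu ^ 2 + starRingEnd ℂ okMu ^ 2 = 1 / 3 := by
  linear_combination (okMu + starRingEnd ℂ okMu + 1) * okMu_add_conj - 2 * okMu_mul_conj

theorem trace_omul_mul_self {x y : M3} (hx : x.trace = 0) (hy : y.trace = 0) :
    (omul x y * omul x y).trace = 1 / 6 * (x * x).trace * (y * y).trace := by
  have htr : (y * x).trace = (x * y).trace := trace_mul_comm y x
  have hsq : (y * x * (y * x)).trace = (x * y * (x * y)).trace := by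
    rw [← Matrix.mul_assoc, trace_mul_comm, Matrix.mul_assoc, Matrix.mul_assoc]
  have hxyyx : (x * y * (y * x)).trace = (x * x * (y * y)).trace := by
    rw [← Matrix.mul_assoc, trace_mul_comm]
    simp only [Matrix.mul_assoc]
  have hyxxy : (y * x * (x * y)).trace = (x * x * (y * y)).trace := by
    rw [trace_mul_comm, hxyyx]
  simp only [omul, sub_mul, mul_sub, add_mul, mul_add, Matrix.smul_mul, Matrix.mul_smul, smul_smul,
    trace_add, trace_sub, trace_smul, Matrix.mul_one, Matrix.one_mul, trace_one, smul_eq_mul,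
    Fintype.card_fin, htr, hsq, hxyyx, hyxxy]
  push_cast
  linear_combination -(1 / 6) * trace_mul_self_mul_trace_mul_self_of_trace_eq_zero hx hy
    + (x * y * (x * y)).trace * okMu_sq_add_conj_sq
    + 2 * (x * x * (y * y)).trace * okMu_mul_conj - (2 / 3) * (x * y).trace ^ 2 * okMu_add_conj

theorem trace_mul_self_eq_six_mul_onorm {x : M3} (hx : x.IsHermitian) :
    (x * x).trace = 6 * (onorm x : ℂ) := by
  have hxx : (x * x).IsHermitian := by
    simpa only [hx.eq] using isHermitian_mul_conjTranspose_self x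
  rw [onorm]
  push_cast
  linear_combination -(hxx.ofReal_re_trace : ((x * x).trace.re : ℂ) = _)

/-- In the real Okubo algebra, the norm is multiplicative:
`n(x*y) = n(x)·n(y)` for all `x, y ∈ 𝒪`. -/
theorem okubo_paper_stmt4 :
    ∀ x ∈ Okubo, ∀ y ∈ Okubo, onorm (omul x y) = onorm x * onorm y := by
  rintro x ⟨hxh, hxt⟩ y ⟨hyh, hyt⟩
  calc onorm (omul x y) = 1 / 6 * (omul x y * omul x y).trace.re := rfl
    _ = 1 / 6 * ((1 / 6 * (6 * onorm x) * (6 * onorm y) : ℝ) : ℂ).re := by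
      rw [trace_omul_mul_self hxt hyt, trace_mul_self_eq_six_mul_onorm hxh,
        trace_mul_self_eq_six_mul_onorm hyh]
      push_cast
      rfl
    _ = onorm x * onorm y := by
      rw [Complex.ofReal_re]
      ring

end
end

section
/- In the real Okubo algebra 𝒪, the norm is associative: ⟨x*y, z⟩ = ⟨x, y*z⟩ for all x, y, z ∈ 𝒪. -/
/-!
The polar form is `⟨a, b⟩ = (1/3) Re tr(ab)`. Against a traceless matrix the scalar term of the
Okubo product contributes nothing, so both `tr((x*y) z)` and `tr(x (y*z))` reduce to
`μ tr(xyz) + μ̄ tr(yxz)` by cyclicity of the trace.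
-/

open Matrix Complex

noncomputable section

lemma opolar_eq_re_trace_mul (a b : M3) : opolar a b = (1 / 3) * (a * b).trace.re := by
  simp only [opolar, onorm, Matrix.add_mul, Matrix.mul_add, Matrix.trace_add, Complex.add_re,
    Matrix.trace_mul_comm b a]
  ring

lemma trace_omul_mul {z : M3} (x y : M3) (hz : z.trace = 0) :
    (omul x y * z).trace = okMu * (x * y * z).trace + starRingEnd ℂ okMu * (y * x * z).trace := by
  simp only [omul, Matrix.add_mul, Matrix.sub_mul, Matrix.smul_mul, Matrix.one_mul,
    Matrix.trace_add, Matrix.trace_sub, Matrix.trace_smul, smul_eq_mul, hz, mul_zero, sub_zero]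

lemma trace_mul_omul {x : M3} (y z : M3) (hx : x.trace = 0) :
    (x * omul y z).trace = okMu * (x * y * z).trace + starRingEnd ℂ okMu * (x * z * y).trace := by
  simp only [omul, Matrix.mul_add, Matrix.mul_sub, Matrix.mul_smul, Matrix.mul_one,
    Matrix.trace_add, Matrix.trace_sub, Matrix.trace_smul, smul_eq_mul, hx, mul_zero, sub_zero,
    Matrix.mul_assoc]

lemma trace_omul_mul_eq_trace_mul_omul {x z : M3} (y : M3) (hx : x.trace = 0)
    (hz : z.trace = 0) : (omul x y * z).trace = (x * omul y z).trace := by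
  rw [trace_omul_mul x y hz, trace_mul_omul y z hx, Matrix.trace_mul_cycle x z y]

/-- In the real Okubo algebra, the norm is associative:
`⟨x*y, z⟩ = ⟨x, y*z⟩` for all `x, y, z ∈ 𝒪`. -/
theorem okubo_paper_stmt5 :
    ∀ x ∈ Okubo, ∀ y ∈ Okubo, ∀ z ∈ Okubo,
      opolar (omul x y) z = opolar x (omul y z) := by
  intro x hx y _ z hz
  rw [opolar_eq_re_trace_mul, opolar_eq_re_trace_mul,
    trace_omul_mul_eq_trace_mul_omul y hx.2 hz.2]

end
end

section
/- Let a, b ∈ 𝒪 with a ≠ 0, where 𝒪 is the real Okubo algebra. Then the equation a*x = b has the unique solution x = n(a)⁻¹·(b*a), and the equation x*a = b has the unique solution x = n(a)⁻¹·(a*b). -/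
/-!
For traceless `a, b` one has `a*(b*a) = (a*b)*a = n(a)·b`: expanding with `μ̄ = 1 - μ` and
`μ² = μ - 1/3` reduces the first identity to the polarized Cayley–Hamilton identity for traceless
`3 × 3` matrices, and transposition, which reverses the Okubo product, turns it into the second.
So left and right multiplication by `a` are inverse to each other up to the factor `n(a)`, which is
nonzero because `Tr(a²) = Tr(aᴴa) > 0` for Hermitian `a ≠ 0`.
-/

open Matrix Complex

noncomputable section

lemma conj_okMu : starRingEnd ℂ okMu = 1 - okMu := by
  simp only [okMu, map_div₀, map_add, map_mul, conj_ofReal, conj_I, map_ofNat]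
  ring

lemma okMu_sq : okMu ^ 2 = okMu - 1 / 3 := by
  have h3 : (Real.sqrt 3 : ℂ) ^ 2 = 3 := by norm_cast; simp
  rw [okMu]
  linear_combination (I ^ 2 / 36) * h3 + (1 / 12 : ℂ) * I_sq

/-- Polarization of the Cayley–Hamilton identity `a³ = ½ Tr(a²) a + det a` of a traceless `a`. -/
lemma mul_mul_add_mul_mul_add_mul_mul_of_trace_eq_zero {K : Type*} [Field K] [CharZero K]
    {a b : Matrix (Fin 3) (Fin 3) K} (ha : a.trace = 0) (hb : b.trace = 0) :
    a * b * a + a * a * b + b * a * a =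
      (a * b).trace • a + ((a * a).trace / 2) • b + (a * a * b).trace • (1 : Matrix _ _ K) := by
  rw [trace_fin_three] at ha hb
  have ha' : a 2 2 = -(a 0 0 + a 1 1) := by linear_combination ha
  have hb' : b 2 2 = -(b 0 0 + b 1 1) := by linear_combination hb
  ext i j
  fin_cases i <;> fin_cases j <;>
    simp only [Matrix.add_apply, Matrix.smul_apply, smul_eq_mul, mul_apply, Fin.sum_univ_three,
      trace_fin_three, one_apply, Fin.isValue, Fin.mk_one, Fin.reduceFinMk, Fin.zero_eta,
      Fin.reduceEq, ↓reduceIte, mul_one, mul_zero, add_zero, ha', hb'] <;>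
    ring

lemma trace_omul (x y : M3) : (omul x y).trace = 0 := by
  simp only [omul, trace_sub, trace_add, trace_smul, trace_one, smul_eq_mul, trace_mul_comm y x,
    Fintype.card_fin, conj_okMu]
  ring

lemma conjTranspose_omul (x y : M3) : (omul x y)ᴴ = omul xᴴ yᴴ := by
  simp only [omul, conjTranspose_sub, conjTranspose_add, conjTranspose_smul, conjTranspose_mul,
    conjTranspose_one, star_mul', ← trace_conjTranspose, star_def, conj_conj, map_div₀, map_one,
    map_ofNat, trace_mul_comm yᴴ xᴴ]
  abel

lemma transpose_omul (x y : M3) : (omul x y)ᵀ = omul yᵀ xᵀ := by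
  simp only [omul, transpose_sub, transpose_add, transpose_smul, transpose_mul, transpose_one,
    ← trace_transpose (x * y), trace_mul_comm yᵀ xᵀ]

lemma omul_smul (z : ℂ) (x y : M3) : omul x (z • y) = z • omul x y := by
  simp only [omul, Matrix.mul_smul, Matrix.smul_mul, trace_smul, smul_eq_mul, smul_smul]
  match_scalars <;> ring

lemma smul_omul (z : ℂ) (x y : M3) : omul (z • x) y = z • omul x y := by
  simp only [omul, Matrix.mul_smul, Matrix.smul_mul, trace_smul, smul_eq_mul, smul_smul]
  match_scalars <;> ring

lemma omul_mem {x y : M3} (hx : x ∈ Okubo) (hy : y ∈ Okubo) : omul x y ∈ Okubo :=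
  ⟨by rw [IsHermitian, conjTranspose_omul, hx.1.eq, hy.1.eq], trace_omul x y⟩

lemma Okubo.smul_mem (r : ℝ) {x : M3} (hx : x ∈ Okubo) : r • x ∈ Okubo :=
  ⟨hx.1.smul (IsSelfAdjoint.all r), by rw [trace_smul, hx.2, smul_zero]⟩

lemma omul_omul_self {a b : M3} (ha : a.trace = 0) (hb : b.trace = 0) :
    omul a (omul b a) = ((a * a).trace / 6) • b := by
  have hCH := mul_mul_add_mul_mul_add_mul_mul_of_trace_eq_zero ha hb
  have hcyc : (a * b * a).trace = (a * a * b).trace := by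
    rw [trace_mul_comm (a * b), Matrix.mul_assoc]
  simp only [omul, Matrix.mul_add, Matrix.add_mul, Matrix.mul_sub, Matrix.sub_mul,
    Matrix.mul_smul, Matrix.smul_mul, Matrix.mul_one, Matrix.one_mul, trace_add, trace_sub,
    trace_smul, smul_eq_mul, ← Matrix.mul_assoc, trace_mul_comm b a, ha, hcyc, conj_okMu]
  linear_combination (norm := skip) (1 / 3 : ℂ) • hCH
  match_scalars <;> ring_nf <;> simp only [okMu_sq] <;> ring

lemma omul_self_omul {a b : M3} (ha : a.trace = 0) (hb : b.trace = 0) :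
    omul (omul a b) a = ((a * a).trace / 6) • b := by
  apply transpose_injective
  rw [transpose_omul, transpose_omul, transpose_smul,
    omul_omul_self (by rwa [trace_transpose]) (by rwa [trace_transpose]), ← transpose_mul,
    trace_transpose]

lemma omul_eq_iff_eq_smul_omul {a b x : M3} (ha : a.trace = 0) (hb : b.trace = 0)
    (hx : x.trace = 0) (hn : (a * a).trace ≠ 0) :
    omul a x = b ↔ x = ((a * a).trace / 6)⁻¹ • omul b a := by
  have hn6 : (a * a).trace / 6 ≠ 0 := div_ne_zero hn (by norm_num)
  constructor
  · rintro rfl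
    rw [omul_self_omul ha hx, inv_smul_smul₀ hn6]
  · rintro rfl
    rw [omul_smul, omul_omul_self ha hb, inv_smul_smul₀ hn6]

lemma omul_eq_iff_eq_smul_omul' {a b x : M3} (ha : a.trace = 0) (hb : b.trace = 0)
    (hx : x.trace = 0) (hn : (a * a).trace ≠ 0) :
    omul x a = b ↔ x = ((a * a).trace / 6)⁻¹ • omul a b := by
  have hn6 : (a * a).trace / 6 ≠ 0 := div_ne_zero hn (by norm_num)
  constructor
  · rintro rfl
    rw [omul_omul_self ha hx, inv_smul_smul₀ hn6]
  · rintro rfl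
    rw [smul_omul, omul_self_omul ha hb, inv_smul_smul₀ hn6]

open ComplexOrder in
lemma trace_mul_self_ne_zero {n : Type*} [Fintype n] {a : Matrix n n ℂ} (ha : a.IsHermitian)
    (hne : a ≠ 0) : (a * a).trace ≠ 0 := by
  simpa only [ha.eq] using trace_conjTranspose_mul_self_eq_zero_iff.not.mpr hne

open ComplexOrder in
lemma ofReal_onorm {a : M3} (ha : a.IsHermitian) : (onorm a : ℂ) = (a * a).trace / 6 := by
  have hreal : (aᴴ * a).trace = ((aᴴ * a).trace.re : ℂ) :=
    eq_re_of_ofReal_le (r := 0) (by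
      simpa only [ofReal_zero] using (posSemidef_conjTranspose_mul_self a).trace_nonneg)
  rw [ha.eq] at hreal
  rw [onorm, ofReal_mul, ← hreal]
  push_cast
  ring

/-- For `a, b ∈ 𝒪` with `a ≠ 0`, the equation `a*x = b` has the
unique solution `x = n(a)⁻¹ • (b*a)`, and the equation `x*a = b` has the unique
solution `x = n(a)⁻¹ • (a*b)`. -/
theorem okubo_paper_stmt8 (a b : M3) (ha : a ∈ Okubo) (hb : b ∈ Okubo) (hne : a ≠ 0) :
    ((onorm a)⁻¹ • omul b a ∈ Okubo ∧
      omul a ((onorm a)⁻¹ • omul b a) = b ∧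
      (∀ x ∈ Okubo, omul a x = b → x = (onorm a)⁻¹ • omul b a)) ∧
    ((onorm a)⁻¹ • omul a b ∈ Okubo ∧
      omul ((onorm a)⁻¹ • omul a b) a = b ∧
      (∀ x ∈ Okubo, omul x a = b → x = (onorm a)⁻¹ • omul a b)) := by
  have hn : (a * a).trace ≠ 0 := trace_mul_self_ne_zero ha.1 hne
  have hba := Okubo.smul_mem (onorm a)⁻¹ (omul_mem hb ha)
  have hab := Okubo.smul_mem (onorm a)⁻¹ (omul_mem ha hb)
  have hsmul (m : M3) : (onorm a)⁻¹ • m = ((a * a).trace / 6)⁻¹ • m := by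
    rw [← Complex.coe_smul, ofReal_inv, ofReal_onorm ha.1]
  simp only [hsmul] at hba hab ⊢
  exact ⟨⟨hba, (omul_eq_iff_eq_smul_omul ha.2 hb.2 hba.2 hn).2 rfl,
      fun x hx => (omul_eq_iff_eq_smul_omul ha.2 hb.2 hx.2 hn).1⟩,
    ⟨hab, (omul_eq_iff_eq_smul_omul' ha.2 hb.2 hab.2 hn).2 rfl,
      fun x hx => (omul_eq_iff_eq_smul_omul' ha.2 hb.2 hx.2 hn).1⟩⟩

end
end
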